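/- In the 3-SAT encoding graph G(φ) (as in the Bounded Max Length reduction), every solution feasible under budget β = |X| and reachability must select as casting voters exactly one literal voter from each pair {v_x, v_{¬x}}, and no clause or dummy voter can be a casting voter. -/

import Mathlib

/-- Voters of the encoding of a 3-CNF formula with variables `X` and `n`
clauses: literal voters `lit x b`, clause voters `clause j`, and the two
clause-dummy voters `dum j false` (= d_{C_j}) and `dum j true` (= d'_{C_j}). -/
inductive Vtx (X : Type) (n : ℕ) where
  | lit : X → Bool → Vtx X n
  | clause : Fin n → Vtx X n
  | dum : Fin n → Bool → Vtx X n
deriving DecidableEq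

/-- A 3-CNF formula over `X` with `n` clauses. -/
abbrev Cnf (X : Type) (n : ℕ) := Fin n → (X × Bool) × ((X × Bool) × (X × Bool))

/-- Edges of the encoding graph. -/
inductive Edge {X : Type} {n : ℕ} (φ : Cnf X n) : Vtx X n → Vtx X n → Prop
  | cd (j : Fin n) (b : Bool) : Edge φ (.clause j) (.dum j b)
  | d1 (j : Fin n) : Edge φ (.dum j false) (.lit (φ j).1.1 (φ j).1.2)
  | d2 (j : Fin n) : Edge φ (.dum j true) (.lit (φ j).2.1.1 (φ j).2.1.2)
  | d3 (j : Fin n) : Edge φ (.dum j true) (.lit (φ j).2.2.1 (φ j).2.2.2)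
  | flip (x : X) (b : Bool) : Edge φ (.lit x b) (.lit x (!b))

/-!
A literal voter can only delegate to its complement, so a complementary pair `{v_x, v_¬x}` that
contains no casting voter cannot reach one: every pair contains a casting voter. Choosing one
casting voter per pair gives `|X|` distinct casting voters, so by the budget `|C| ≤ |X|` these
are all of them.
-/

open Finset

theorem Relation.ReflTransGen.invariant {α : Type*} {r : α → α → Prop} {p : α → Prop}
    (hp : ∀ a b, r a b → p a → p b) {a b : α} (h : Relation.ReflTransGen r a b) (ha : p a) :
    p b := by
  induction h with
  | refl => exact ha
  | tail _ hbc ih => exact hp _ _ hbc ih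

theorem Finset.eq_map_univ_of_card_le {X α : Type*} [Fintype X] {C : Finset α} (f : X ↪ α)
    (hmem : ∀ x, f x ∈ C) (hcard : #C ≤ Fintype.card X) : C = univ.map f := by
  refine (eq_of_subset_of_card_le (fun a ha => ?_) (by simpa using hcard)).symm
  obtain ⟨x, -, rfl⟩ := mem_map.mp ha
  exact hmem x

theorem Edge.eq_of_lit {X : Type} {n : ℕ} {φ : Cnf X n} {x : X} {b : Bool} {v : Vtx X n}
    (h : Edge φ (.lit x b) v) : v = .lit x (!b) := by
  cases h
  rfl

section Feasible

variable {X : Type} {n : ℕ} {φ : Cnf X n} {C : Finset (Vtx X n)} {Dn : Vtx X n → Option (Vtx X n)}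

theorem lit_mem_or_lit_mem (hedge : ∀ i j, Dn i = some j → Edge φ i j)
    (hreach : ∀ i, i ∉ C → ∃ j ∈ C, Relation.ReflTransGen (fun a b => Dn a = some b) i j)
    (x : X) : Vtx.lit x true ∈ C ∨ Vtx.lit x false ∈ C := by
  by_contra! hx
  obtain ⟨j, hjC, hpath⟩ := hreach _ hx.1
  obtain ⟨b, rfl⟩ : ∃ b, j = .lit x b := by
    refine hpath.invariant (p := fun v => ∃ b, v = .lit x b) ?_ ⟨true, rfl⟩
    rintro u v huv ⟨b, rfl⟩
    exact ⟨!b, (hedge _ _ huv).eq_of_lit⟩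
  cases b <;> simp_all

theorem exists_eq_lit_of_mem [Fintype X] (hedge : ∀ i j, Dn i = some j → Edge φ i j)
    (hreach : ∀ i, i ∉ C → ∃ j ∈ C, Relation.ReflTransGen (fun a b => Dn a = some b) i j)
    (hbudget : #C ≤ Fintype.card X) {a : Vtx X n} (ha : a ∈ C) :
    ∃ x b, a = .lit x b ∧ (Vtx.lit x true ∈ C → b = true) := by
  classical
  let select : X ↪ Vtx X n :=
    ⟨fun x => .lit x (decide (Vtx.lit x true ∈ C)), fun x y hxy => (Vtx.lit.inj hxy).1⟩
  have hselect (x : X) : select x ∈ C := by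
    change Vtx.lit x _ ∈ C
    by_cases hx : Vtx.lit x true ∈ C
    · simp [hx]
    · simpa [hx] using lit_mem_or_lit_mem hedge hreach x
  rw [eq_map_univ_of_card_le select hselect hbudget] at ha
  obtain ⟨x, -, rfl⟩ := mem_map.mp ha
  exact ⟨x, _, rfl, decide_eq_true⟩

end Feasible

theorem feasible_budget_selects_literals_general {X : Type} [Fintype X]
    {n : ℕ} (φ : Cnf X n) (C : Finset (Vtx X n)) (Dn : Vtx X n → Option (Vtx X n))
    (hedge : ∀ i j, Dn i = some j → Edge φ i j)
    (hreach : ∀ i, i ∉ C → ∃ j ∈ C,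
      Relation.ReflTransGen (fun a b => Dn a = some b) i j)
    (hbudget : C.card ≤ Fintype.card X) :
    (∀ x : X, (Vtx.lit x true ∈ C ↔ Vtx.lit x false ∉ C)) ∧
    (∀ j : Fin n, Vtx.clause j ∉ C) ∧
    (∀ (j : Fin n) (b : Bool), Vtx.dum j b ∉ C) := by
  have hlit := fun {a} (ha : a ∈ C) => exists_eq_lit_of_mem hedge hreach hbudget ha
  refine ⟨fun x => ⟨fun ht hf => ?_, (lit_mem_or_lit_mem hedge hreach x).resolve_right⟩,
    fun j hj => ?_, fun j b hj => ?_⟩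
  · obtain ⟨y, b, hy, hb⟩ := hlit hf
    obtain ⟨rfl, rfl⟩ := Vtx.lit.inj hy
    exact Bool.false_ne_true (hb ht)
  · obtain ⟨_, _, ⟨⟩, -⟩ := hlit hj
  · obtain ⟨_, _, ⟨⟩, -⟩ := hlit hj

/-- In the 3-SAT encoding graph, every solution feasible under the budget
`β = |X|` (all voting costs 1, delegating costs 0, so the cost is `|C|`) and
the reachability constraint selects as casting voters exactly one literal voter
from each complementary pair, and no clause voter or dummy voter is a casting
voter. -/
theorem feasible_budget_selects_literals {X : Type} [Fintype X] [DecidableEq X]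
    {n : ℕ} (φ : Cnf X n) (C : Finset (Vtx X n)) (Dn : Vtx X n → Option (Vtx X n))
    (hnone : ∀ i, Dn i = none ↔ i ∈ C)
    (hedge : ∀ i j, Dn i = some j → Edge φ i j)
    (hreach : ∀ i, i ∉ C → ∃ j ∈ C,
      Relation.ReflTransGen (fun a b => Dn a = some b) i j)
    (hbudget : C.card ≤ Fintype.card X) :
    (∀ x : X, (Vtx.lit x true ∈ C ↔ Vtx.lit x false ∉ C)) ∧
    (∀ j : Fin n, Vtx.clause j ∉ C) ∧
    (∀ (j : Fin n) (b : Bool), Vtx.dum j b ∉ C) :=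
  feasible_budget_selects_literals_general φ C Dn hedge hreach hbudget
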